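/- Define A : ℝ² → ℝ^{2×2} and b : ℝ² → ℝ² by A(y) := [[1 + arcsin(sin²(π y₁)), (1/2)sin(2π y₁)], [(1/2)sin(2π y₁), 2 + cos²(π y₁)]] and b(y) := sign(sin(2π y₁))·(1,1) for y = (y₁,y₂) ∈ ℝ², where sign(t) equals 1 if t > 0, −1 if t < 0, and 0 if t = 0. Define K(t) := ∫₀ᵗ sign(sin(2πx))/(1 + arcsin(sin²(πx))) dx, C₁ := ∫₀¹ e^{K(t)}/(1 + arcsin(sin²(πt))) dt, and r(y) := C₁⁻¹ · e^{K(y₁)}/(1 + arcsin(sin²(π y₁))) for y = (y₁,y₂) ∈ ℝ². Then r is ℤ²-periodic and positive, ∫_{(0,1)²} r = 1, and ∫_{(0,1)²} r(y)·(A(y):D²φ(y) + b(y)·∇φ(y)) dy = 0 for every twice continuously differentiable ℤ²-periodic function φ : ℝ² → ℝ; that is, r is the invariant measure associated with (A,b). -/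

import Mathlib

open MeasureTheory

noncomputable section

/-- The unit cell `Y = (0,1)^n`. -/
def unitCell (n : ℕ) : Set (Fin n → ℝ) := Set.univ.pi fun _ => Set.Ioo (0 : ℝ) 1

/-- Frobenius norm squared of a matrix. -/
def frobSq {n : ℕ} (M : Matrix (Fin n) (Fin n) ℝ) : ℝ := ∑ i, ∑ j, (M i j) ^ 2

/-- Frobenius inner product of two matrices. -/
def frobInner {n : ℕ} (M N : Matrix (Fin n) (Fin n) ℝ) : ℝ := ∑ i, ∑ j, M i j * N i j

/-- Euclidean norm squared of a vector. -/
def euclSq {n : ℕ} (v : Fin n → ℝ) : ℝ := ∑ i, (v i) ^ 2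

/-- Euclidean dot product. -/
def dotc {n : ℕ} (v w : Fin n → ℝ) : ℝ := ∑ i, v i * w i

/-- `ℤⁿ`-periodicity of a function on `ℝⁿ`. -/
def IsPeriodic {n : ℕ} {α : Type*} (f : (Fin n → ℝ) → α) : Prop :=
  ∀ (x : Fin n → ℝ) (k : Fin n → ℤ), f (x + fun i => (k i : ℝ)) = f x

/-- Partial derivative in direction `i`. -/
def pd {n : ℕ} (f : (Fin n → ℝ) → ℝ) (i : Fin n) (x : Fin n → ℝ) : ℝ :=
  fderiv ℝ f x (Pi.single i 1)

/-- Gradient. -/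
def grad {n : ℕ} (f : (Fin n → ℝ) → ℝ) (x : Fin n → ℝ) : Fin n → ℝ := fun i => pd f i x

/-- Hessian matrix. -/
def hess {n : ℕ} (f : (Fin n → ℝ) → ℝ) (x : Fin n → ℝ) : Matrix (Fin n) (Fin n) ℝ :=
  Matrix.of fun i j => pd (pd f j) i x

/-- Laplacian. -/
def lap {n : ℕ} (f : (Fin n → ℝ) → ℝ) (x : Fin n → ℝ) : ℝ := ∑ i, pd (pd f i) i x

/-- Jacobian matrix of a vector field: `(jac w x) i j = ∂_j w_i (x)`. -/
def jac {n : ℕ} (w : (Fin n → ℝ) → Fin n → ℝ) (x : Fin n → ℝ) : Matrix (Fin n) (Fin n) ℝ :=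
  Matrix.of fun i j => pd (fun y => w y i) j x

/-- Divergence of a vector field. -/
def divg {n : ℕ} (w : (Fin n → ℝ) → Fin n → ℝ) (x : Fin n → ℝ) : ℝ :=
  ∑ i, pd (fun y => w y i) i x

/-- Setting B: symmetric-valued, measurable, `ℤⁿ`-periodic, essentially bounded coefficients,
uniform ellipticity, and the Cordes-type condition with constant `δ ∈ (n/(n+π²), 1]`. -/
structure SettingB {n : ℕ} (A : (Fin n → ℝ) → Matrix (Fin n) (Fin n) ℝ)
    (b : (Fin n → ℝ) → Fin n → ℝ) (lam Lam δ : ℝ) : Prop where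
  symm : ∀ x, (A x).IsSymm
  measA : ∀ i j, Measurable fun x => A x i j
  measb : ∀ i, Measurable fun x => b x i
  perA : IsPeriodic A
  perb : IsPeriodic b
  bddA : ∃ C : ℝ, ∀ᵐ x ∂(volume : Measure (Fin n → ℝ)), frobSq (A x) ≤ C
  bddb : ∃ C : ℝ, ∀ᵐ x ∂(volume : Measure (Fin n → ℝ)), euclSq (b x) ≤ C
  lam_pos : 0 < lam
  lam_le_Lam : lam ≤ Lam
  ellip : ∀ᵐ x ∂(volume : Measure (Fin n → ℝ)), ∀ ξ : Fin n → ℝ,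
    lam * euclSq ξ ≤ dotc ξ (Matrix.mulVec (A x) ξ) ∧
      dotc ξ (Matrix.mulVec (A x) ξ) ≤ Lam * euclSq ξ
  delta_mem : δ ∈ Set.Ioc ((n : ℝ) / ((n : ℝ) + Real.pi ^ 2)) 1
  cordes : ∀ᵐ x ∂(volume : Measure (Fin n → ℝ)),
    (frobSq (A x) + euclSq (b x)) / (Matrix.trace (A x)) ^ 2 ≤ 1 / ((n : ℝ) - 1 + δ)

/-- The renormalization function `γ = tr A / (|A|² + |b|²)`. -/
def gam {n : ℕ} (A : (Fin n → ℝ) → Matrix (Fin n) (Fin n) ℝ)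
    (b : (Fin n → ℝ) → Fin n → ℝ) (x : Fin n → ℝ) : ℝ :=
  Matrix.trace (A x) / (frobSq (A x) + euclSq (b x))

/-- The constant `κ = (δ − n/(n+π²))·(n+π²)/π²`. -/
def kappa (n : ℕ) (δ : ℝ) : ℝ :=
  (δ - (n : ℝ) / ((n : ℝ) + Real.pi ^ 2)) * (((n : ℝ) + Real.pi ^ 2) / Real.pi ^ 2)

/-- The invariant measure: measurable, `ℤⁿ`-periodic, square-integrable over `Y`,
with unit mass over `Y`, solving the stationary FPK equation in the very weak sense. -/
def IsInvariantMeasure {n : ℕ} (A : (Fin n → ℝ) → Matrix (Fin n) (Fin n) ℝ)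
    (b : (Fin n → ℝ) → Fin n → ℝ) (r : (Fin n → ℝ) → ℝ) : Prop :=
  Measurable r ∧ IsPeriodic r ∧
    IntegrableOn (fun x => (r x) ^ 2) (unitCell n) ∧
    (∫ x in unitCell n, r x) = 1 ∧
    ∀ φ : (Fin n → ℝ) → ℝ, ContDiff ℝ 2 φ → IsPeriodic φ →
      (∫ x in unitCell n,
        r x * (frobInner (A x) (hess φ x) + dotc (b x) (grad φ x))) = 0

/-- The bilinear form `B₂`. -/
def B2 {n : ℕ} (A : (Fin n → ℝ) → Matrix (Fin n) (Fin n) ℝ)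
    (b : (Fin n → ℝ) → Fin n → ℝ) (v w : (Fin n → ℝ) → Fin n → ℝ) : ℝ :=
  (∫ x in unitCell n,
    divg v x * (frobInner (gam A b x • A x) (jac w x) + dotc (gam A b x • b x) (w x)))
  + (1 / 2) * ∫ x in unitCell n,
      frobInner (jac v x - (jac v x).transpose) (jac w x - (jac w x).transpose)

/-- The diffusion matrix of the first numerical experiment (Setting A). -/
def Aex19 (y : Fin 2 → ℝ) : Matrix (Fin 2) (Fin 2) ℝ :=
  Matrix.of
    ![![1 + Real.arcsin (Real.sin (Real.pi * y 0) ^ 2),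
        (1 / 2) * Real.sin (2 * Real.pi * y 0)],
      ![(1 / 2) * Real.sin (2 * Real.pi * y 0),
        2 + Real.cos (Real.pi * y 0) ^ 2]]

/-- The drift of the first numerical experiment (Setting A). -/
def bex19 (y : Fin 2 → ℝ) : Fin 2 → ℝ :=
  fun _ => Real.sign (Real.sin (2 * Real.pi * y 0))

/-- `K(t) = ∫₀ᵗ sign(sin(2πx))/(1 + arcsin(sin²(πx))) dx`. -/
def Kex19 (t : ℝ) : ℝ :=
  ∫ x in (0 : ℝ)..t,
    Real.sign (Real.sin (2 * Real.pi * x))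
      / (1 + Real.arcsin (Real.sin (Real.pi * x) ^ 2))

/-- `C₁ = ∫₀¹ e^{K(t)}/(1 + arcsin(sin²(πt))) dt`. -/
def C1ex19 : ℝ :=
  ∫ t in (0 : ℝ)..1,
    Real.exp (Kex19 t) / (1 + Real.arcsin (Real.sin (Real.pi * t) ^ 2))

/-- `r(y) = C₁⁻¹ e^{K(y₁)}/(1 + arcsin(sin²(π y₁)))`. -/
def rex19 (y : Fin 2 → ℝ) : ℝ :=
  C1ex19⁻¹ * (Real.exp (Kex19 (y 0)) / (1 + Real.arcsin (Real.sin (Real.pi * y 0) ^ 2)))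
/-!
Write `a(t) = 1 + arcsin(sin²(πt))` and `s(t) = sign(sin 2πt)`, so that `r = C₁⁻¹ e^K / a`
depends on `y₁` only and `K' = s / a` away from the zeros of `sin 2πt`. Then `r a = C₁⁻¹ e^K` and
`r s = C₁⁻¹ (e^K)'`, and with the symmetry of `D²φ` the integrand becomes a divergence:
`C₁ r (A:D²φ + b·∇φ) = ∂₁(e^K ∂₁φ) + ∂₂(e^K/a · (sin(2πy₁) ∂₁φ + (2 + cos²(πy₁)) ∂₂φ + s φ))`.
Both fluxes are `ℤ²`-periodic: `K` is `1`-periodic because `K(1) = 0`, the integrand of `K` being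
odd about `t = 1/2`. So by Fubini and the fundamental theorem of calculus on each segment
(for `e^K`, off the single kink at `y₁ = 1/2`) both terms integrate to zero over the unit cell.
-/

open Real Set Function intervalIntegral

namespace Real

theorem measurable_sign : Measurable Real.sign :=
  Measurable.ite measurableSet_Iio measurable_const
    (Measurable.ite measurableSet_Ioi measurable_const measurable_const)

theorem abs_sign_le_one (r : ℝ) : |Real.sign r| ≤ 1 := by
  rcases sign_apply_eq r with h | h | h <;> simp [h]

theorem continuousAt_sign_of_ne_zero {r : ℝ} (hr : r ≠ 0) : ContinuousAt Real.sign r := by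
  refine (continuousAt_const (y := Real.sign r)).congr ?_
  rcases hr.lt_or_gt with h | h
  · filter_upwards [eventually_lt_nhds h] with x hx
    rw [sign_of_neg hx, sign_of_neg h]
  · filter_upwards [eventually_gt_nhds h] with x hx
    rw [sign_of_pos hx, sign_of_pos h]

end Real

theorem sin_two_pi_mul_ne_zero {t : ℝ} (ht : t ∈ Ioo (0 : ℝ) 1 \ {1 / 2}) :
    sin (2 * π * t) ≠ 0 := by
  obtain ⟨⟨h0, h1⟩, hne⟩ := ht
  have hshift : sin (2 * π * t - π) = 0 ↔ 2 * π * t - π = 0 :=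
    sin_eq_zero_iff_of_lt_of_lt (by nlinarith [pi_pos]) (by nlinarith [pi_pos])
  rw [sin_sub_pi, neg_eq_zero] at hshift
  rw [Ne, hshift]
  intro h
  have : t = 1 / 2 := by field_simp; nlinarith [pi_pos]
  exact hne this

theorem setIntegral_unitCell_two {E : Type*} [NormedAddCommGroup E] [NormedSpace ℝ E]
    (F : (Fin 2 → ℝ) → E) :
    ∫ y in unitCell 2, F y = ∫ p in Ioo (0 : ℝ) 1 ×ˢ Ioo (0 : ℝ) 1, F ![p.1, p.2] := by
  have hpre : MeasurableEquiv.finTwoArrow ⁻¹' (Ioo (0 : ℝ) 1 ×ˢ Ioo (0 : ℝ) 1) = unitCell 2 := by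
    ext y
    simp [unitCell, Fin.forall_fin_two]
  have h := (volume_preserving_finTwoArrow ℝ).setIntegral_preimage_emb
    (MeasurableEquiv.measurableEmbedding _) (fun p : ℝ × ℝ => F ![p.1, p.2])
    (Ioo (0 : ℝ) 1 ×ˢ Ioo (0 : ℝ) 1)
  rw [hpre] at h
  rw [← h]
  congr! 3 with y
  ext i
  fin_cases i <;> rfl

theorem IsPeriodic.pd {n : ℕ} {f : (Fin n → ℝ) → ℝ} (hf : IsPeriodic f) (i : Fin n) :
    IsPeriodic (pd f i) := by
  intro x k
  rw [_root_.pd, _root_.pd, ← fderiv_comp_add_right]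
  exact congrArg (fun g => fderiv ℝ g x (Pi.single i 1)) (funext fun y => hf y k)

theorem IsPeriodic.apply_one_vec {f : (Fin 2 → ℝ) → ℝ} (hf : IsPeriodic f) (σ : ℝ) :
    f ![1, σ] = f ![0, σ] := by
  convert hf ![0, σ] ![1, 0] using 2
  ext i; fin_cases i <;> simp

theorem IsPeriodic.apply_vec_one {f : (Fin 2 → ℝ) → ℝ} (hf : IsPeriodic f) (t : ℝ) :
    f ![t, 1] = f ![t, 0] := by
  convert hf ![t, 0] ![0, 1] using 2
  ext i; fin_cases i <;> simp

theorem ContDiff.pd {n : ℕ} {k m : WithTop ℕ∞} {f : (Fin n → ℝ) → ℝ} (hf : ContDiff ℝ k f)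
    (hmk : m + 1 ≤ k) (i : Fin n) : ContDiff ℝ m (pd f i) :=
  (hf.fderiv_right hmk).clm_apply contDiff_const

theorem pd_pd_comm {n : ℕ} {f : (Fin n → ℝ) → ℝ} (hf : ContDiff ℝ 2 f) (x : Fin n → ℝ)
    (i j : Fin n) : pd (pd f j) i x = pd (pd f i) j x := by
  have hdf : DifferentiableAt ℝ (fderiv ℝ f) x :=
    (hf.fderiv_right (m := 1) (by norm_num)).differentiable (by norm_num) x
  have hsnd : ∀ i j : Fin n,
      pd (pd f j) i x = fderiv ℝ (fderiv ℝ f) x (Pi.single i 1) (Pi.single j 1) := by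
    intro i j
    change fderiv ℝ (fun y => fderiv ℝ f y (Pi.single j 1)) x (Pi.single i 1) = _
    rw [fderiv_clm_apply hdf (differentiableAt_const _)]
    simp
  rw [hsnd, hsnd, (hf.contDiffAt.isSymmSndFDerivAt (by simp)) _ _]

theorem hasDerivAt_vec_fst {f : (Fin 2 → ℝ) → ℝ} {t σ : ℝ}
    (hf : DifferentiableAt ℝ f ![t, σ]) :
    HasDerivAt (fun u => f ![u, σ]) (pd f 0 ![t, σ]) t := by
  have hline : HasDerivAt (fun u : ℝ => ![u, σ]) (Pi.single 0 1) t := by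
    rw [hasDerivAt_pi]
    intro i; fin_cases i
    · simpa using hasDerivAt_id' t
    · simpa using hasDerivAt_const t σ
  exact hf.hasFDerivAt.comp_hasDerivAt t hline

theorem hasDerivAt_vec_snd {f : (Fin 2 → ℝ) → ℝ} {t σ : ℝ}
    (hf : DifferentiableAt ℝ f ![t, σ]) :
    HasDerivAt (fun v => f ![t, v]) (pd f 1 ![t, σ]) σ := by
  have hline : HasDerivAt (fun v : ℝ => ![t, v]) (Pi.single 1 1) σ := by
    rw [hasDerivAt_pi]
    intro i; fin_cases i
    · simpa using hasDerivAt_const σ t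
    · simpa using hasDerivAt_id' σ
  exact hf.hasFDerivAt.comp_hasDerivAt σ hline

theorem IsCompact.integrableOn_add_mul {X : Type*} [TopologicalSpace X] [T2Space X]
    [MeasurableSpace X] [OpensMeasurableSpace X] {μ : Measure X} [IsFiniteMeasureOnCompacts μ]
    {K : Set X} (hK : IsCompact K) {u v w : X → ℝ} (hu : ContinuousOn u K)
    (hv : ContinuousOn v K) (hw : Measurable w) (hw1 : ∀ x, |w x| ≤ 1) :
    IntegrableOn (fun x => u x + w x * v x) K μ :=
  (hu.integrableOn_compact hK).add <| (hv.integrableOn_compact hK).bdd_mul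
    hw.aestronglyMeasurable (Filter.Eventually.of_forall hw1)

@[fun_prop]
theorem continuous_pd {n : ℕ} {f : (Fin n → ℝ) → ℝ} (hf : ContDiff ℝ 2 f) (i : Fin n) :
    Continuous (pd f i) :=
  (hf.pd (m := 1) (by norm_num) i).continuous

@[fun_prop]
theorem continuous_pd_pd {n : ℕ} {f : (Fin n → ℝ) → ℝ} (hf : ContDiff ℝ 2 f) (i j : Fin n) :
    Continuous (pd (pd f i) j) :=
  ((hf.pd (m := 1) (by norm_num) i).pd (m := 0) (by norm_num) j).continuous

theorem setIntegral_Ioo_eq_intervalIntegral {E : Type*} [NormedAddCommGroup E]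
    [NormedSpace ℝ E] {a b : ℝ} (hab : a ≤ b) (f : ℝ → E) :
    ∫ t in Ioo a b, f t = ∫ t in a..b, f t := by
  rw [intervalIntegral.integral_of_le hab, integral_Ioc_eq_integral_Ioo]

def aEx19 (t : ℝ) : ℝ := 1 + arcsin (sin (π * t) ^ 2)

def sgnEx19 (t : ℝ) : ℝ := Real.sign (sin (2 * π * t))

def densEx19 (t : ℝ) : ℝ := exp (Kex19 t) / aEx19 t

theorem one_le_aEx19 (t : ℝ) : 1 ≤ aEx19 t :=
  le_add_of_nonneg_right (arcsin_nonneg.2 (sq_nonneg _))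

theorem aEx19_pos (t : ℝ) : 0 < aEx19 t := one_pos.trans_le (one_le_aEx19 t)

theorem continuous_aEx19 : Continuous aEx19 := by
  unfold aEx19; fun_prop

theorem aEx19_periodic : Periodic aEx19 1 := by
  intro t
  rw [aEx19, aEx19, mul_add, mul_one, sin_add_pi, neg_sq]

theorem aEx19_one_sub (t : ℝ) : aEx19 (1 - t) = aEx19 t := by
  rw [aEx19, aEx19, mul_one_sub, sin_pi_sub]

theorem sgnEx19_periodic : Periodic sgnEx19 1 := by
  intro t
  rw [sgnEx19, sgnEx19, mul_add, mul_one, sin_add_two_pi]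

theorem sgnEx19_one_sub (t : ℝ) : sgnEx19 (1 - t) = -sgnEx19 t := by
  rw [sgnEx19, sgnEx19, mul_one_sub, sin_sub, sin_two_pi, cos_two_pi, zero_mul, one_mul,
    zero_sub, Real.sign_neg]

theorem measurable_sgnEx19 : Measurable sgnEx19 :=
  Real.measurable_sign.comp (by fun_prop)

theorem abs_sgnEx19_le_one (t : ℝ) : |sgnEx19 t| ≤ 1 := Real.abs_sign_le_one _

theorem continuousAt_sgnEx19 {t : ℝ} (ht : sin (2 * π * t) ≠ 0) : ContinuousAt sgnEx19 t :=
  (Real.continuousAt_sign_of_ne_zero ht).comp (f := fun t => sin (2 * π * t)) (by fun_prop)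

theorem intervalIntegrable_sgnEx19_div_aEx19 (a b : ℝ) :
    IntervalIntegrable (fun x => sgnEx19 x / aEx19 x) volume a b := by
  refine IntervalIntegrable.mono_fun' (g := fun _ => 1) intervalIntegrable_const
    (measurable_sgnEx19.div continuous_aEx19.measurable).aestronglyMeasurable
    (Filter.Eventually.of_forall fun x => ?_)
  dsimp only
  rw [norm_div, Real.norm_eq_abs, Real.norm_of_nonneg (aEx19_pos x).le]
  exact div_le_one_of_le₀ ((abs_sgnEx19_le_one x).trans (one_le_aEx19 x)) (aEx19_pos x).le

theorem Kex19_zero : Kex19 0 = 0 := integral_same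

theorem Kex19_one : Kex19 1 = 0 := by
  have h := integral_comp_sub_left (a := 0) (b := 1) (fun x => sgnEx19 x / aEx19 x) 1
  simp only [sgnEx19_one_sub, aEx19_one_sub, neg_div, intervalIntegral.integral_neg, sub_zero,
    sub_self] at h
  change -Kex19 1 = Kex19 1 at h
  linarith

theorem Kex19_periodic : Periodic Kex19 1 := by
  intro t
  have h := (sgnEx19_periodic.div aEx19_periodic).intervalIntegral_add_eq_add 0 t
    intervalIntegrable_sgnEx19_div_aEx19
  rw [zero_add] at h
  change Kex19 (t + 1) = Kex19 t + Kex19 1 at h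
  rw [h, Kex19_one, add_zero]

@[fun_prop]
theorem continuous_Kex19 : Continuous Kex19 :=
  continuous_primitive intervalIntegrable_sgnEx19_div_aEx19 0

theorem hasDerivAt_Kex19 {t : ℝ} (ht : sin (2 * π * t) ≠ 0) :
    HasDerivAt Kex19 (sgnEx19 t / aEx19 t) t :=
  integral_hasDerivAt_right (intervalIntegrable_sgnEx19_div_aEx19 0 t)
    ((measurable_sgnEx19.div continuous_aEx19.measurable).stronglyMeasurable
      |>.stronglyMeasurableAtFilter)
    ((continuousAt_sgnEx19 ht).div continuous_aEx19.continuousAt (aEx19_pos t).ne')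

theorem densEx19_pos (t : ℝ) : 0 < densEx19 t := div_pos (exp_pos _) (aEx19_pos t)

@[fun_prop]
theorem continuous_densEx19 : Continuous densEx19 :=
  (continuous_exp.comp continuous_Kex19).div continuous_aEx19 fun t => (aEx19_pos t).ne'

theorem densEx19_periodic : Periodic densEx19 1 := by
  intro t
  rw [densEx19, densEx19, Kex19_periodic t, aEx19_periodic t]

theorem C1ex19_pos : 0 < C1ex19 :=
  intervalIntegral_pos_of_pos_on (continuous_densEx19.intervalIntegrable 0 1)
    (fun t _ => densEx19_pos t) one_pos

theorem rex19_eq (y : Fin 2 → ℝ) : rex19 y = C1ex19⁻¹ * densEx19 (y 0) := rfl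

/-- `∂₁` of the flux `e^{K(y₁)} ∂₁φ` (where `K` is differentiable), written at `y = (p.1, p.2)`. -/
def fluxDerivFstEx19 (φ : (Fin 2 → ℝ) → ℝ) (p : ℝ × ℝ) : ℝ :=
  exp (Kex19 p.1) * pd (pd φ 0) 0 ![p.1, p.2] +
    sgnEx19 p.1 * (densEx19 p.1 * pd φ 0 ![p.1, p.2])

/-- `∂₂` of the flux `e^{K(y₁)}/a(y₁) · (sin(2πy₁) ∂₁φ + (2 + cos²(πy₁)) ∂₂φ + sgn(sin 2πy₁) φ)`,
written at `y = (p.1, p.2)`. -/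
def fluxDerivSndEx19 (φ : (Fin 2 → ℝ) → ℝ) (p : ℝ × ℝ) : ℝ :=
  densEx19 p.1 * (sin (2 * π * p.1) * pd (pd φ 0) 1 ![p.1, p.2] +
      (2 + cos (π * p.1) ^ 2) * pd (pd φ 1) 1 ![p.1, p.2]) +
    sgnEx19 p.1 * (densEx19 p.1 * pd φ 1 ![p.1, p.2])

theorem rex19_mul_generator_eq {φ : (Fin 2 → ℝ) → ℝ} (hφ : ContDiff ℝ 2 φ) (p : ℝ × ℝ) :
    rex19 ![p.1, p.2] * (frobInner (Aex19 ![p.1, p.2]) (hess φ ![p.1, p.2]) +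
      dotc (bex19 ![p.1, p.2]) (grad φ ![p.1, p.2])) =
      C1ex19⁻¹ * (fluxDerivFstEx19 φ p + fluxDerivSndEx19 φ p) := by
  have hexp : exp (Kex19 p.1) = densEx19 p.1 * aEx19 p.1 :=
    (div_mul_cancel₀ _ (aEx19_pos p.1).ne').symm
  simp only [rex19_eq, frobInner, hess, dotc, grad, Aex19, bex19, fluxDerivFstEx19,
    fluxDerivSndEx19, Fin.sum_univ_two, Matrix.of_apply, Matrix.cons_val_zero, Matrix.cons_val_one,
    pd_pd_comm hφ _ 0 1]
  rw [hexp]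
  simp only [aEx19, sgnEx19]
  ring

theorem integrableOn_fluxDerivFstEx19 {φ : (Fin 2 → ℝ) → ℝ} (hφ : ContDiff ℝ 2 φ) :
    IntegrableOn (fluxDerivFstEx19 φ) (Ioo (0 : ℝ) 1 ×ˢ Ioo (0 : ℝ) 1) := by
  exact ((isCompact_Icc.prod isCompact_Icc).integrableOn_add_mul
    (u := fun p => exp (Kex19 p.1) * pd (pd φ 0) 0 ![p.1, p.2])
    (v := fun p => densEx19 p.1 * pd φ 0 ![p.1, p.2])
    (Continuous.continuousOn (by fun_prop)) (Continuous.continuousOn (by fun_prop))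
    (measurable_sgnEx19.comp measurable_fst) fun p => abs_sgnEx19_le_one p.1).mono_set
    (prod_mono Ioo_subset_Icc_self Ioo_subset_Icc_self)

theorem integrableOn_fluxDerivSndEx19 {φ : (Fin 2 → ℝ) → ℝ} (hφ : ContDiff ℝ 2 φ) :
    IntegrableOn (fluxDerivSndEx19 φ) (Ioo (0 : ℝ) 1 ×ˢ Ioo (0 : ℝ) 1) := by
  exact ((isCompact_Icc.prod isCompact_Icc).integrableOn_add_mul
    (u := fun p => densEx19 p.1 * (sin (2 * π * p.1) * pd (pd φ 0) 1 ![p.1, p.2] +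
      (2 + cos (π * p.1) ^ 2) * pd (pd φ 1) 1 ![p.1, p.2]))
    (v := fun p => densEx19 p.1 * pd φ 1 ![p.1, p.2])
    (Continuous.continuousOn (by fun_prop)) (Continuous.continuousOn (by fun_prop))
    (measurable_sgnEx19.comp measurable_fst) fun p => abs_sgnEx19_le_one p.1).mono_set
    (prod_mono Ioo_subset_Icc_self Ioo_subset_Icc_self)

theorem integral_fluxDerivFstEx19_line {φ : (Fin 2 → ℝ) → ℝ} (hφ : ContDiff ℝ 2 φ)
    (hper : IsPeriodic φ) (σ : ℝ) : ∫ t in (0 : ℝ)..1, fluxDerivFstEx19 φ (t, σ) = 0 := by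
  have hderiv : ∀ t ∈ Ioo (0 : ℝ) 1 \ {1 / 2},
      HasDerivAt (fun t => exp (Kex19 t) * pd φ 0 ![t, σ]) (fluxDerivFstEx19 φ (t, σ)) t := by
    intro t ht
    refine (((hasDerivAt_Kex19 (sin_two_pi_mul_ne_zero ht)).exp).mul
      (hasDerivAt_vec_fst (((hφ.pd (m := 1) (by norm_num) 0).differentiable
        one_ne_zero) ![t, σ]))).congr_deriv ?_
    simp only [fluxDerivFstEx19, densEx19]
    ring
  have hint : IntervalIntegrable (fun t => fluxDerivFstEx19 φ (t, σ)) volume 0 1 :=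
    (isCompact_uIcc.integrableOn_add_mul (Continuous.continuousOn (by fun_prop))
      (Continuous.continuousOn (by fun_prop)) measurable_sgnEx19
      abs_sgnEx19_le_one).intervalIntegrable
  rw [integral_eq_of_hasDerivAt_off_countable_of_le _ _ zero_le_one (countable_singleton _)
    (Continuous.continuousOn (by fun_prop)) hderiv hint, Kex19_one, Kex19_zero,
    (hper.pd 0).apply_one_vec, sub_self]

theorem integral_fluxDerivSndEx19_line {φ : (Fin 2 → ℝ) → ℝ} (hφ : ContDiff ℝ 2 φ)
    (hper : IsPeriodic φ) (t : ℝ) : ∫ σ in (0 : ℝ)..1, fluxDerivSndEx19 φ (t, σ) = 0 := by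
  have hdiff : ∀ (f : (Fin 2 → ℝ) → ℝ), ContDiff ℝ 1 f → ∀ σ, DifferentiableAt ℝ f ![t, σ] :=
    fun f hf σ => hf.differentiable one_ne_zero _
  have hderiv : ∀ σ ∈ uIcc (0 : ℝ) 1, HasDerivAt
      (fun σ => densEx19 t * (sin (2 * π * t) * pd φ 0 ![t, σ] +
        (2 + cos (π * t) ^ 2) * pd φ 1 ![t, σ]) + sgnEx19 t * (densEx19 t * φ ![t, σ]))
      (fluxDerivSndEx19 φ (t, σ)) σ := fun σ _ =>
    ((((hasDerivAt_vec_snd (hdiff _ (hφ.pd (by norm_num) 0) σ)).const_mul _).add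
      ((hasDerivAt_vec_snd (hdiff _ (hφ.pd (by norm_num) 1) σ)).const_mul _)).const_mul _).add
      (((hasDerivAt_vec_snd (hdiff _ (hφ.of_le (by norm_num)) σ)).const_mul _).const_mul _)
  have hcont : Continuous fun σ => fluxDerivSndEx19 φ (t, σ) := by
    simp only [fluxDerivSndEx19]; fun_prop
  rw [integral_eq_sub_of_hasDerivAt hderiv (hcont.intervalIntegrable 0 1),
    hper.apply_vec_one, (hper.pd 0).apply_vec_one, (hper.pd 1).apply_vec_one, sub_self]

theorem setIntegral_fluxDerivFstEx19 {φ : (Fin 2 → ℝ) → ℝ} (hφ : ContDiff ℝ 2 φ)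
    (hper : IsPeriodic φ) : ∫ p in Ioo (0 : ℝ) 1 ×ˢ Ioo (0 : ℝ) 1, fluxDerivFstEx19 φ p = 0 := by
  have hint : Integrable (fluxDerivFstEx19 φ)
      ((volume.restrict (Ioo (0 : ℝ) 1)).prod (volume.restrict (Ioo (0 : ℝ) 1))) := by
    rw [Measure.prod_restrict, ← Measure.volume_eq_prod]
    exact integrableOn_fluxDerivFstEx19 hφ
  rw [Measure.volume_eq_prod, ← Measure.prod_restrict, integral_prod _ hint,
    integral_integral_swap (f := fun t σ => fluxDerivFstEx19 φ (t, σ)) hint]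
  simp [setIntegral_Ioo_eq_intervalIntegral zero_le_one, integral_fluxDerivFstEx19_line hφ hper]

theorem setIntegral_fluxDerivSndEx19 {φ : (Fin 2 → ℝ) → ℝ} (hφ : ContDiff ℝ 2 φ)
    (hper : IsPeriodic φ) : ∫ p in Ioo (0 : ℝ) 1 ×ˢ Ioo (0 : ℝ) 1, fluxDerivSndEx19 φ p = 0 := by
  rw [Measure.volume_eq_prod, setIntegral_prod _ (integrableOn_fluxDerivSndEx19 hφ)]
  simp [setIntegral_Ioo_eq_intervalIntegral zero_le_one, integral_fluxDerivSndEx19_line hφ hper]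

theorem isPeriodic_rex19 : IsPeriodic rex19 := by
  intro x k
  simpa [rex19_eq, C1ex19_pos.ne'] using densEx19_periodic.int_mul (k 0) (x 0)

theorem rex19_pos (y : Fin 2 → ℝ) : 0 < rex19 y :=
  mul_pos (inv_pos.2 C1ex19_pos) (densEx19_pos _)

theorem integral_rex19 : ∫ y in unitCell 2, rex19 y = 1 := by
  calc ∫ y in unitCell 2, rex19 y
      = ∫ p in Ioo (0 : ℝ) 1 ×ˢ Ioo (0 : ℝ) 1, C1ex19⁻¹ * densEx19 p.1 :=
        setIntegral_unitCell_two _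
    _ = ∫ t in Ioo (0 : ℝ) 1, C1ex19⁻¹ * densEx19 t := by
        rw [Measure.volume_eq_prod, ← Measure.prod_restrict,
          integral_fun_fst (fun t => C1ex19⁻¹ * densEx19 t)]
        simp
    _ = 1 := by
        rw [setIntegral_Ioo_eq_intervalIntegral zero_le_one, intervalIntegral.integral_const_mul]
        exact inv_mul_cancel₀ C1ex19_pos.ne'

theorem integral_rex19_mul_generator {φ : (Fin 2 → ℝ) → ℝ} (hφ : ContDiff ℝ 2 φ)
    (hper : IsPeriodic φ) :
    ∫ y in unitCell 2, rex19 y * (frobInner (Aex19 y) (hess φ y) + dotc (bex19 y) (grad φ y))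
      = 0 := by
  simp_rw [setIntegral_unitCell_two, rex19_mul_generator_eq hφ]
  rw [MeasureTheory.integral_const_mul, integral_add (integrableOn_fluxDerivFstEx19 hφ)
    (integrableOn_fluxDerivSndEx19 hφ), setIntegral_fluxDerivFstEx19 hφ hper,
    setIntegral_fluxDerivSndEx19 hφ hper, add_zero, mul_zero]

/-- the function `r` above is the invariant measure associated with
the coefficients of the first numerical experiment: it is `ℤ²`-periodic and positive,
has unit mass over the unit cell, and satisfies
`∫_Y r (A:D²φ + b·∇φ) = 0` for every `C²` `ℤ²`-periodic test function `φ`. -/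
theorem stmt_19 :
    IsPeriodic rex19 ∧ (∀ y : Fin 2 → ℝ, 0 < rex19 y) ∧
      (∫ y in unitCell 2, rex19 y) = 1 ∧
      ∀ φ : (Fin 2 → ℝ) → ℝ, ContDiff ℝ 2 φ → IsPeriodic φ →
        (∫ y in unitCell 2,
          rex19 y * (frobInner (Aex19 y) (hess φ y) + dotc (bex19 y) (grad φ y))) = 0 :=
  ⟨isPeriodic_rex19, rex19_pos, integral_rex19, fun _ hφ hper =>
    integral_rex19_mul_generator hφ hper⟩
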